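/- Let (H,R) be a quasitriangular bialgebra and suppose the universal R-matrix R lies in Z(H)⊗Z(H), where Z(H) is the center of H. Then H is cocommutative, and an element χ ∈ H⊗H satisfies both hexagon-type conditions (Id⊗Δ)(χ) = χ₁₂ + R₁₂⁻¹χ₁₃R₁₂ and (Δ⊗Id)(χ) = χ₂₃ + R₂₃⁻¹χ₁₃R₂₃ if and only if χ ∈ P(H)⊗P(H), where P(H) is the space of primitive elements of H. -/

import Mathlib

open scoped TensorProduct

noncomputable section

variable (k H : Type*) [Field k] [Ring H] [Bialgebra k H]

/-- leg embedding `a ⊗ b ↦ a ⊗ b ⊗ 1` into `H ⊗ (H ⊗ H)`. -/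
def leg12 : H ⊗[k] H →ₐ[k] H ⊗[k] (H ⊗[k] H) :=
  Algebra.TensorProduct.map (AlgHom.id k H) Algebra.TensorProduct.includeLeft

/-- leg embedding `a ⊗ b ↦ 1 ⊗ a ⊗ b`. -/
def leg23 : H ⊗[k] H →ₐ[k] H ⊗[k] (H ⊗[k] H) :=
  Algebra.TensorProduct.includeRight

/-- leg embedding `a ⊗ b ↦ a ⊗ 1 ⊗ b`. -/
def leg13 : H ⊗[k] H →ₐ[k] H ⊗[k] (H ⊗[k] H) :=
  Algebra.TensorProduct.map (AlgHom.id k H) Algebra.TensorProduct.includeRight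

/-- `(Id ⊗ Δ)` as an algebra map `H ⊗ H → H ⊗ (H ⊗ H)`. -/
def idComul : H ⊗[k] H →ₐ[k] H ⊗[k] (H ⊗[k] H) :=
  Algebra.TensorProduct.map (AlgHom.id k H) (Bialgebra.comulAlgHom k H)

/-- `(Δ ⊗ Id)` as an algebra map `H ⊗ H → H ⊗ (H ⊗ H)` (after reassociation). -/
def comulId : H ⊗[k] H →ₐ[k] H ⊗[k] (H ⊗[k] H) :=
  (Algebra.TensorProduct.assoc k k k H H H).toAlgHom.comp
    (Algebra.TensorProduct.map (Bialgebra.comulAlgHom k H) (AlgHom.id k H))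

/-- the flip `a ⊗ b ↦ b ⊗ a` as an algebra map. -/
def swapT : H ⊗[k] H →ₐ[k] H ⊗[k] H := (Algebra.TensorProduct.comm k H H).toAlgHom

/-- A quasitriangular structure on the bialgebra `H`. -/
structure QT where
  R : H ⊗[k] H
  Rinv : H ⊗[k] H
  mul_inv : R * Rinv = 1
  inv_mul : Rinv * R = 1
  quasi_cocomm : ∀ h : H, swapT k H (Coalgebra.comul (R := k) h) * R = R * Coalgebra.comul (R := k) h
  hex1 : idComul k H R = leg13 k H R * leg12 k H R
  hex2 : comulId k H R = leg13 k H R * leg23 k H R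

/-- A pre-Cartier quasitriangular bialgebra structure on `H`. -/
structure PreCartier extends QT k H where
  χ : H ⊗[k] H
  chi_comm : ∀ h : H, χ * Coalgebra.comul (R := k) h = Coalgebra.comul (R := k) h * χ
  chi_hex1 : idComul k H χ = leg12 k H χ + leg12 k H Rinv * leg13 k H χ * leg12 k H R
  chi_hex2 : comulId k H χ = leg23 k H χ + leg23 k H Rinv * leg13 k H χ * leg23 k H R

/-- The submodule of primitive elements of `H`. -/
def Primitives : Submodule k H where
  carrier := {x : H | Coalgebra.comul (R := k) x = x ⊗ₜ[k] (1 : H) + (1 : H) ⊗ₜ[k] x}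
  add_mem' := by
    intro a b ha hb
    simp only [Set.mem_setOf_eq] at *
    rw [map_add, ha, hb, TensorProduct.add_tmul, TensorProduct.tmul_add]
    abel
  zero_mem' := by
    simp only [Set.mem_setOf_eq, map_zero, TensorProduct.zero_tmul, TensorProduct.tmul_zero,
      add_zero]
  smul_mem' := by
    intro c x hx
    simp only [Set.mem_setOf_eq] at *
    rw [map_smul, hx]
    simp [smul_add, TensorProduct.smul_tmul', TensorProduct.tmul_smul]

/-! If `R` is central, then conjugating by `R` (or by its legs) does nothing: the
quasi-cocommutativity `Δᵒᵖ(h) R = R Δ(h)` collapses to `Δᵒᵖ = Δ`, and the two hexagon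
conditions on `χ` collapse to `(Id ⊗ Δ) χ = χ₁₂ + χ₁₃` and `(Δ ⊗ Id) χ = χ₂₃ + χ₁₃`. With
`D x = Δ x - x ⊗ 1 - 1 ⊗ x`, these say `(Id ⊗ D) χ = 0` and `(D ⊗ Id) χ = 0`. Over a field,
tensoring is exact, so `χ ∈ (H ⊗ ker D) ∩ (ker D ⊗ H) = ker D ⊗ ker D = P(H) ⊗ P(H)`. -/

section Center

variable {R A B C : Type*} [CommSemiring R] [Semiring A] [Semiring B] [Semiring C]
  [Algebra R A] [Algebra R B] [Algebra R C]

theorem Algebra.TensorProduct.tmul_mem_center {a : A} {b : B}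
    (ha : a ∈ Subalgebra.center R A) (hb : b ∈ Subalgebra.center R B) :
    a ⊗ₜ[R] b ∈ Subalgebra.center R (A ⊗[R] B) := by
  rw [Subalgebra.mem_center_iff] at ha hb ⊢
  intro x
  induction x using TensorProduct.induction_on with
  | zero => simp
  | tmul c d => simp only [Algebra.TensorProduct.tmul_mul_tmul, ha, hb]
  | add x y hx hy => rw [add_mul, mul_add, hx, hy]

theorem AlgHom.map_mem_center_of_mem_range_tensor_center (f : A ⊗[R] B →ₐ[R] C)
    (hf : ∀ a ∈ Subalgebra.center R A, ∀ b ∈ Subalgebra.center R B,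
      f (a ⊗ₜ b) ∈ Subalgebra.center R C)
    {x : A ⊗[R] B}
    (hx : x ∈ LinearMap.range
      (TensorProduct.map (Subalgebra.toSubmodule (Subalgebra.center R A)).subtype
        (Subalgebra.toSubmodule (Subalgebra.center R B)).subtype)) :
    f x ∈ Subalgebra.center R C := by
  rw [TensorProduct.range_map_eq_span_tmul] at hx
  refine Submodule.span_le
    (p := (Subalgebra.toSubmodule (Subalgebra.center R C)).comap f.toLinearMap) |>.mpr ?_ hx
  rintro _ ⟨a, b, rfl⟩
  exact hf a a.2 b b.2

end Center

theorem mul_mul_eq_self_of_mem_center {M : Type*} [Monoid M] {u v : M}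
    (hu : u ∈ Set.center M) (hvu : v * u = 1) (x : M) : v * x * u = x := by
  rw [mul_assoc, ← (hu.comm x).eq, ← mul_assoc, hvu, one_mul]

section TensorKernel

open LinearMap TensorProduct

variable {K V W : Type*} [Field K] [AddCommGroup V] [Module K V] [AddCommGroup W] [Module K W]

theorem Submodule.range_rTensor_subtype_inf_range_lTensor_subtype
    (P : Submodule K V) (Q : Submodule K W) :
    range (P.subtype.rTensor W) ⊓ range (Q.subtype.lTensor V) =
      range (TensorProduct.map P.subtype Q.subtype) := by
  obtain ⟨π, hπ⟩ := P.subtype.exists_leftInverse_of_injective P.ker_subtype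
  obtain ⟨ρ, hρ⟩ := Q.subtype.exists_leftInverse_of_injective Q.ker_subtype
  refine le_antisymm ?_ ?_
  · rintro χ ⟨⟨x, hx⟩, ⟨y, hy⟩⟩
    have hP : (P.subtype ∘ₗ π).rTensor W χ = χ := by
      rw [← hx, ← rTensor_comp_apply, comp_assoc, hπ, comp_id]
    have hQ : (Q.subtype ∘ₗ ρ).lTensor V χ = χ := by
      rw [← hy, ← lTensor_comp_apply, comp_assoc, hρ, comp_id]
    refine ⟨TensorProduct.map π ρ χ, ?_⟩
    rw [← comp_apply, ← TensorProduct.map_comp, ← rTensor_comp_lTensor, comp_apply, hQ, hP]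
  · rintro _ ⟨z, rfl⟩
    exact ⟨⟨Q.subtype.lTensor P z, by rw [← comp_apply, rTensor_comp_lTensor]⟩,
      ⟨P.subtype.rTensor Q z, by rw [← comp_apply, lTensor_comp_rTensor]⟩⟩

theorem LinearMap.ker_rTensor_inf_ker_lTensor (D : V →ₗ[K] W) :
    ker (D.rTensor V) ⊓ ker (D.lTensor V) = range (map (ker D).subtype (ker D).subtype) := by
  rw [(Module.Flat.rTensor_exact V D.exact_subtype_ker_map).linearMap_ker_eq,
    (Module.Flat.lTensor_exact V D.exact_subtype_ker_map).linearMap_ker_eq,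
    Submodule.range_rTensor_subtype_inf_range_lTensor_subtype]

end TensorKernel

section Primitives

open LinearMap TensorProduct

def primitiveDefect : H →ₗ[k] H ⊗[k] H :=
  Coalgebra.comul - ((mk k H H).flip 1 + mk k H H 1)

theorem ker_primitiveDefect : ker (primitiveDefect k H) = Primitives k H := by
  ext x
  simp [primitiveDefect, Primitives, sub_eq_zero]

theorem idComul_sub_leg12_sub_leg13 (χ : H ⊗[k] H) :
    idComul k H χ - leg12 k H χ - leg13 k H χ = (primitiveDefect k H).lTensor H χ := by
  induction χ using TensorProduct.induction_on with
  | zero => simp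
  | tmul a b =>
    simp [idComul, leg12, leg13, primitiveDefect, Bialgebra.comulAlgHom_apply, sub_sub]
  | add x y hx hy => simp only [map_add]; rw [← hx, ← hy]; abel

theorem comulId_sub_leg23_sub_leg13 (χ : H ⊗[k] H) :
    comulId k H χ - leg23 k H χ - leg13 k H χ =
      Algebra.TensorProduct.assoc k k k H H H ((primitiveDefect k H).rTensor H χ) := by
  induction χ using TensorProduct.induction_on with
  | zero => simp
  | tmul a b =>
    simp [comulId, leg23, leg13, primitiveDefect, Bialgebra.comulAlgHom_apply, sub_sub,
      add_comm]
  | add x y hx hy => simp only [map_add]; rw [← hx, ← hy]; abel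

theorem idComul_eq_leg12_add_leg13_iff (χ : H ⊗[k] H) :
    idComul k H χ = leg12 k H χ + leg13 k H χ ↔ χ ∈ ker ((primitiveDefect k H).lTensor H) := by
  rw [mem_ker, ← idComul_sub_leg12_sub_leg13, sub_sub, sub_eq_zero]

theorem comulId_eq_leg23_add_leg13_iff (χ : H ⊗[k] H) :
    comulId k H χ = leg23 k H χ + leg13 k H χ ↔ χ ∈ ker ((primitiveDefect k H).rTensor H) := by
  rw [mem_ker, ← EmbeddingLike.map_eq_zero_iff (f := Algebra.TensorProduct.assoc k k k H H H),
    ← comulId_sub_leg23_sub_leg13, sub_sub, sub_eq_zero]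

theorem hexagons_iff_mem_range_map_primitives (χ : H ⊗[k] H) :
    (idComul k H χ = leg12 k H χ + leg13 k H χ ∧
      comulId k H χ = leg23 k H χ + leg13 k H χ) ↔
      χ ∈ range (map (Primitives k H).subtype (Primitives k H).subtype) := by
  rw [idComul_eq_leg12_add_leg13_iff, comulId_eq_leg23_add_leg13_iff, and_comm,
    ← Submodule.mem_inf, ker_rTensor_inf_ker_lTensor, ker_primitiveDefect]

end Primitives

variable {k H} in
theorem QT.swapT_comul_eq_of_commute (Q : QT k H) {h : H}
    (hR : Commute Q.R (Coalgebra.comul (R := k) h)) :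
    swapT k H (Coalgebra.comul (R := k) h) = Coalgebra.comul (R := k) h :=
  (Units.mul_left_inj ⟨Q.R, Q.Rinv, Q.mul_inv, Q.inv_mul⟩).mp ((Q.quasi_cocomm h).trans hR.eq)

theorem central_R_matrix (Q : QT k H)
    (hR : Q.R ∈ LinearMap.range
      (TensorProduct.map (Subalgebra.toSubmodule (Subalgebra.center k H)).subtype
        (Subalgebra.toSubmodule (Subalgebra.center k H)).subtype)) :
    (∀ h : H, swapT k H (Coalgebra.comul (R := k) h) = Coalgebra.comul (R := k) h) ∧
    ∀ χ : H ⊗[k] H,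
      (idComul k H χ = leg12 k H χ + leg12 k H Q.Rinv * leg13 k H χ * leg12 k H Q.R ∧
        comulId k H χ = leg23 k H χ + leg23 k H Q.Rinv * leg13 k H χ * leg23 k H Q.R) ↔
      χ ∈ LinearMap.range
        (TensorProduct.map (Primitives k H).subtype (Primitives k H).subtype) := by
  open Algebra.TensorProduct in
  have hR_center : Q.R ∈ Subalgebra.center k (H ⊗[k] H) :=
    (AlgHom.id k _).map_mem_center_of_mem_range_tensor_center
      (fun a ha b hb => tmul_mem_center ha hb) hR
  have hR12_center : leg12 k H Q.R ∈ Subalgebra.center k (H ⊗[k] (H ⊗[k] H)) :=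
    (leg12 k H).map_mem_center_of_mem_range_tensor_center (fun a ha b hb => by
      simpa [leg12] using tmul_mem_center ha (tmul_mem_center hb (Subalgebra.one_mem _))) hR
  have hR23_center : leg23 k H Q.R ∈ Subalgebra.center k (H ⊗[k] (H ⊗[k] H)) :=
    (leg23 k H).map_mem_center_of_mem_range_tensor_center (fun a ha b hb => by
      simpa [leg23] using tmul_mem_center (Subalgebra.one_mem _) (tmul_mem_center ha hb)) hR
  have map_Rinv_mul_R (leg : H ⊗[k] H →ₐ[k] H ⊗[k] (H ⊗[k] H)) : leg Q.Rinv * leg Q.R = 1 := by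
    rw [← map_mul, Q.inv_mul, map_one]
  refine ⟨fun h => Q.swapT_comul_eq_of_commute (hR_center.comm _), fun χ => ?_⟩
  rw [mul_mul_eq_self_of_mem_center hR12_center (map_Rinv_mul_R _),
    mul_mul_eq_self_of_mem_center hR23_center (map_Rinv_mul_R _)]
  exact hexagons_iff_mem_range_map_primitives k H χ

end
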